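/- arXiv:2408.11543 — 3 statements merged into one kernel-verified Lean document; each statement's English description precedes it below -/
import Mathlib

section
/- Let G be a finitely generated infinite group. Then the following are equivalent: (i) G admits a virtual homomorphism; (ii) there exists a Banach metric d on G and a metric functional h in the metric-functional boundary ∂(G,d) whose orbit {x.h : x ∈ G} under the G-action is finite. -/
open Filter Topology

section Defs

variable {G : Type*}

/-- `d` is a metric on `X` (nonnegative, vanishing exactly on the diagonal,
symmetric, triangle inequality). -/
def IsMetric {X : Type*} (d : X → X → ℝ) : Prop :=
  (∀ x y, 0 ≤ d x y) ∧ (∀ x y, d x y = 0 ↔ x = y) ∧ (∀ x y, d x y = d y x) ∧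
    (∀ x y z, d x z ≤ d x y + d y z)

/-- The Busemann function of `x` with base point `1`: `b_x(y) = d(x,y) - d(x,1)`. -/
def bus [Group G] (d : G → G → ℝ) (x y : G) : ℝ := d x y - d x 1

/-- `h` belongs to the metric-functional boundary `∂(G,d)`: it is a pointwise
limit of Busemann functions and is not itself a Busemann function. -/
def InBoundary [Group G] (d : G → G → ℝ) (h : G → ℝ) : Prop :=
  (∃ u : ℕ → G, ∀ y : G, Tendsto (fun n => bus d (u n) y) atTop (𝓝 (h y))) ∧
    ∀ x : G, h ≠ bus d x

/-- The action of `x ∈ G` on functions: `(x.h)(y) = h(x⁻¹y) - h(x⁻¹)`. -/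
def act [Group G] (x : G) (h : G → ℝ) : G → ℝ := fun y => h (x⁻¹ * y) - h x⁻¹

/-- `S` is a finite symmetric generating set of `G`. -/
def FinSymGen [Group G] (S : Set G) : Prop :=
  S.Finite ∧ (∀ s ∈ S, s⁻¹ ∈ S) ∧ Subgroup.closure S = ⊤

/-- The word length of `x` with respect to `S`: the least `n` such that `x`
is a product of `n` elements of `S`. -/
noncomputable def wordLength [Group G] (S : Set G) (x : G) : ℕ :=
  sInf {n : ℕ | ∃ l : List G, (∀ s ∈ l, s ∈ S) ∧ l.length = n ∧ l.prod = x}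

/-- The word metric with respect to `S` : `d_S(x,y) = |x⁻¹y|_S`. -/
noncomputable def wordDist [Group G] (S : Set G) (x y : G) : ℝ :=
  (wordLength S (x⁻¹ * y) : ℝ)

/-- `(G,d)` is quasi-isometric to a Cayley graph of `G`. -/
def QIToCayley [Group G] (d : G → G → ℝ) : Prop :=
  ∃ S : Set G, FinSymGen S ∧ ∃ φ : G → G, ∃ C : ℝ, 0 < C ∧
    (∀ y : G, ∃ x : G, wordDist S (φ x) y ≤ C) ∧
    ∀ x y : G, C⁻¹ * d x y - C ≤ wordDist S (φ x) (φ y) ∧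
      wordDist S (φ x) (φ y) ≤ C * d x y + C

/-- A Banach metric on `G`: an integer-valued, left-invariant, proper metric,
quasi-isometric to a Cayley graph, all of whose metric functionals are unbounded. -/
def IsBanachMetric [Group G] (d : G → G → ℝ) : Prop :=
  IsMetric d ∧
  (∀ x y : G, ∃ n : ℕ, d x y = n) ∧
  (∀ x y z : G, d (z * x) (z * y) = d x y) ∧
  (∀ r : ℝ, {x : G | d x 1 ≤ r}.Finite) ∧
  QIToCayley d ∧
  ∀ h : G → ℝ, InBoundary d h → ¬ ∃ B : ℝ, ∀ x : G, |h x| ≤ B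

/-- A virtual homomorphism on `G`: a function `φ : G → ℤ` restricting to a
nontrivial homomorphism on some finite index subgroup. -/
def IsVirtualHom [Group G] (φ : G → ℤ) : Prop :=
  ∃ H : Subgroup G, H.FiniteIndex ∧
    (∀ a b : G, a ∈ H → b ∈ H → φ (a * b) = φ a + φ b) ∧
    ∃ a ∈ H, φ a ≠ 0

end Defs

/-!
A virtual homomorphism `φ` on a finite-index subgroup `H` induces a cocycle `c : G → ℤ^(G ⧸ H)`.
For a finite symmetric generating set `S` and `R` large, `L g = max (|g|_S, R ‖c g‖₁)` is a length
function whose metric `d x y = L (x⁻¹ y)` is Banach. Along a sequence `v n` with uniformly bounded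
increments `L (v n * y) - L (v n)`, either the word part of `L` dominates infinitely often, and
then cutting off the end of a geodesic word lowers `L` by a fixed amount, or eventually the `ℓ¹`
part dominates; then a sign pattern `σ` shared by infinitely many `c (v n)` is orthogonal to the
image of the normal core of `H`, so `g ↦ ⟨σ, c g⟩` is bounded, although it is unbounded along `v n`.
Taking `z` in the normal core with all coordinates of `c z` nonzero, the Busemann functions along
`z⁻ⁿ` converge to `h y = R ∑_ω sign (c z (y • ω)) * c y ω`, and `x • h` only changes the sign
pattern, so the orbit of `h` is finite.

Conversely, the stabilizer of a metric functional `h` with finite orbit has finite index, and `h`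
restricts to an integer-valued homomorphism on it, which is nontrivial because `h` is unbounded.
-/

open SignType

namespace WordLength

variable {G : Type*} [Group G] {S : Set G}

theorem exists_list_prod_eq (hinv : ∀ s ∈ S, s⁻¹ ∈ S) (hgen : Subgroup.closure S = ⊤) (g : G) :
    ∃ l : List G, (∀ s ∈ l, s ∈ S) ∧ l.prod = g := by
  have hsymm : S ∪ S⁻¹ = S := Set.union_eq_left.mpr fun s hs => by simpa using hinv _ hs
  have hg : g ∈ (Subgroup.closure S).toSubmonoid := by simp [hgen]
  rw [Subgroup.closure_toSubmonoid, hsymm] at hg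
  exact Submonoid.exists_list_of_mem_closure hg

theorem wordLength_le_length {l : List G} (hl : ∀ s ∈ l, s ∈ S) :
    wordLength S l.prod ≤ l.length := by
  unfold wordLength
  exact Nat.sInf_le ⟨l, hl, rfl, rfl⟩

theorem exists_list_length_eq (hinv : ∀ s ∈ S, s⁻¹ ∈ S) (hgen : Subgroup.closure S = ⊤) (g : G) :
    ∃ l : List G, (∀ s ∈ l, s ∈ S) ∧ l.length = wordLength S g ∧ l.prod = g := by
  obtain ⟨l, hl, rfl⟩ := exists_list_prod_eq hinv hgen g
  have hne : {n | ∃ l' : List G, (∀ s ∈ l', s ∈ S) ∧ l'.length = n ∧ l'.prod = l.prod}.Nonempty :=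
    ⟨_, l, hl, rfl, rfl⟩
  exact Nat.sInf_mem hne

@[simp]
theorem wordLength_one : wordLength S (1 : G) = 0 :=
  Nat.le_zero.mp (wordLength_le_length (l := []) (by simp))

variable (hinv : ∀ s ∈ S, s⁻¹ ∈ S) (hgen : Subgroup.closure S = ⊤)
include hinv hgen

theorem eq_one_of_wordLength_eq_zero {g : G} (h : wordLength S g = 0) : g = 1 := by
  obtain ⟨l, -, hlen, rfl⟩ := exists_list_length_eq hinv hgen g
  rw [h, List.length_eq_zero_iff] at hlen
  simp [hlen]

theorem wordLength_mul_le (g h : G) :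
    wordLength S (g * h) ≤ wordLength S g + wordLength S h := by
  obtain ⟨lg, hlg, hg, rfl⟩ := exists_list_length_eq hinv hgen g
  obtain ⟨lh, hlh, hh, rfl⟩ := exists_list_length_eq hinv hgen h
  have := wordLength_le_length (l := lg ++ lh) fun s hs =>
    (List.mem_append.mp hs).elim (hlg s) (hlh s)
  simpa [hg, hh] using this

theorem wordLength_inv (g : G) : wordLength S g⁻¹ = wordLength S g := by
  have key (x : G) : wordLength S x⁻¹ ≤ wordLength S x := by
    obtain ⟨l, hl, hlen, rfl⟩ := exists_list_length_eq hinv hgen x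
    have := wordLength_le_length (S := S) (l := (l.map (·⁻¹)).reverse) fun s hs => by
      obtain ⟨t, ht, rfl⟩ := List.mem_map.mp (List.mem_reverse.mp hs)
      exact hinv t (hl t ht)
    simpa [← List.prod_inv_reverse, hlen] using this
  exact le_antisymm (key g) (by simpa using key g⁻¹)

theorem wordLength_pow_le (g : G) (n : ℕ) : wordLength S (g ^ n) ≤ n * wordLength S g := by
  induction n with
  | zero => simp
  | succ k ih =>
    rw [pow_succ, add_one_mul]
    exact (wordLength_mul_le hinv hgen _ _).trans (by omega)

theorem exists_mul_eq_of_le_wordLength {k : ℕ} {g : G} (hk : k ≤ wordLength S g) :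
    ∃ a b : G, a * b = g ∧ wordLength S a + k ≤ wordLength S g ∧ wordLength S b ≤ k := by
  obtain ⟨l, hl, hlen, rfl⟩ := exists_list_length_eq hinv hgen g
  refine ⟨(l.take (l.length - k)).prod, (l.drop (l.length - k)).prod, by
    rw [← List.prod_append, List.take_append_drop], ?_, ?_⟩
  · have := wordLength_le_length (l := l.take (l.length - k)) fun s hs =>
      hl s (List.mem_of_mem_take hs)
    simp only [List.length_take] at this
    omega
  · have := wordLength_le_length (l := l.drop (l.length - k)) fun s hs =>
      hl s (List.mem_of_mem_drop hs)
    simp only [List.length_drop] at this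
    omega

theorem finite_setOf_wordLength_le (hfin : S.Finite) (n : ℕ) :
    {g : G | wordLength S g ≤ n}.Finite := by
  have : Finite S := hfin
  refine ((List.finite_length_le S n).image fun l => (l.map (↑)).prod).subset ?_
  intro g hg
  obtain ⟨l, hl, hlen, rfl⟩ := exists_list_length_eq hinv hgen g
  refine ⟨l.pmap Subtype.mk hl, by simpa [hlen] using hg, ?_⟩
  simp [List.map_pmap]

theorem le_mul_wordLength {f : G → ℤ} (hf1 : f 1 = 0) (hfmul : ∀ g h, f (g * h) ≤ f g + f h)
    {Λ : ℤ} (hΛ : ∀ s ∈ S, f s ≤ Λ) (g : G) : f g ≤ Λ * wordLength S g := by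
  obtain ⟨l, hl, hlen, rfl⟩ := exists_list_length_eq hinv hgen g
  rw [← hlen]
  clear hlen
  induction l with
  | nil => simp [hf1]
  | cons s l ih =>
    simp only [List.prod_cons, List.length_cons, List.mem_cons, forall_eq_or_imp] at hl ⊢
    have := hfmul s l.prod
    have := ih hl.2
    have := hΛ s hl.1
    push_cast
    linarith

theorem exists_le_mul_wordLength (hfin : S.Finite) {f : G → ℤ} (hf1 : f 1 = 0)
    (hfmul : ∀ g h, f (g * h) ≤ f g + f h) :
    ∃ Λ : ℤ, 0 ≤ Λ ∧ ∀ g, f g ≤ Λ * wordLength S g := by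
  obtain ⟨Λ, hΛ⟩ := (hfin.image f).bddAbove
  exact ⟨max Λ 0, le_max_right _ _, le_mul_wordLength hinv hgen hf1 hfmul
    fun s hs => (hΛ ⟨s, hs, rfl⟩).trans (le_max_left _ _)⟩

variable {F : G → ℤ} (hF0 : ∀ g, 0 ≤ F g) (hFmul : ∀ g h, F (g * h) ≤ F g + F h) {Λ : ℤ}
  (hΛ : 0 ≤ Λ) (hFle : ∀ g, F g ≤ Λ * wordLength S g)
include hF0 hFmul hΛ hFle

theorem exists_max_mul_add_le {c : ℕ} {g : G} (hg : F g + (Λ + 1) * c ≤ wordLength S g) :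
    ∃ y, wordLength S y ≤ c ∧
      max (wordLength S (g * y) : ℤ) (F (g * y)) + c ≤ max (wordLength S g : ℤ) (F g) := by
  have hc : c ≤ wordLength S g := by
    have := hF0 g
    have : 0 ≤ Λ * c := by positivity
    zify
    linarith
  obtain ⟨a, b, rfl, ha, hb⟩ := exists_mul_eq_of_le_wordLength hinv hgen hc
  refine ⟨b⁻¹, by rwa [wordLength_inv hinv hgen], ?_⟩
  have hFa : F a ≤ F (a * b) + Λ * c := by
    have h1 := hFmul (a * b) b⁻¹
    have h2 := hFle b⁻¹
    rw [mul_inv_cancel_right] at h1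
    rw [wordLength_inv hinv hgen] at h2
    have : Λ * wordLength S b ≤ Λ * c := mul_le_mul_of_nonneg_left (by exact_mod_cast hb) hΛ
    linarith
  rw [mul_inv_cancel_right]
  refine (max_add_add_right _ _ _).symm.le.trans (le_max_of_le_left (max_le ?_ ?_))
  · exact_mod_cast ha
  · linarith

theorem exists_eventually_wordLength_lt (hfin : S.Finite) {v : ℕ → G} {C : ℤ}
    (hC : ∀ y, ∀ᶠ n in atTop, |max (wordLength S (v n * y) : ℤ) (F (v n * y)) -
      max (wordLength S (v n) : ℤ) (F (v n))| ≤ C) :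
    ∃ D : ℤ, ∀ᶠ n in atTop, (wordLength S (v n) : ℤ) < F (v n) + D := by
  by_contra! h
  set c := (C + 1).toNat
  have : ∃ᶠ n in atTop, ∃ y ∈ {y | wordLength S y ≤ c},
      max (wordLength S (v n * y) : ℤ) (F (v n * y)) + c ≤
        max (wordLength S (v n) : ℤ) (F (v n)) :=
    (h ((Λ + 1) * c)).mono fun n hn => exists_max_mul_add_le hinv hgen hF0 hFmul hΛ hFle hn
  obtain ⟨y, -, hy⟩ := (finite_setOf_wordLength_le hinv hgen hfin c).frequently_exists.mp this
  obtain ⟨n, hn, hCn⟩ := (hy.and_eventually (hC y)).exists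
  rw [abs_le] at hCn
  omega

end WordLength

section SignPattern

theorem abs_add_eq_of_abs_le {a b : ℤ} (h : |b| ≤ |a|) : |a + b| = |a| + sign a * b := by
  rcases lt_trichotomy a 0 with ha | rfl | ha
  · rw [abs_le, abs_of_neg ha] at h
    rw [abs_of_nonpos (by omega), abs_of_neg ha, sign_neg ha]
    simp only [SignType.coe_neg, SignType.coe_one]
    ring
  · simp_all
  · rw [abs_le, abs_of_pos ha] at h
    rw [abs_of_nonneg (by omega), abs_of_pos ha, sign_pos ha]
    simp only [SignType.coe_one]
    ring

theorem neg_abs_le_sign_mul (t : SignType) (c : ℤ) : -|c| ≤ t * c := by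
  cases t <;> simp [neg_abs_le, le_abs_self]

variable {ι : Type*} [Fintype ι]

theorem sum_abs_add_eq_of_abs_le {a b : ι → ℤ} (h : ∀ i, |b i| ≤ |a i|) :
    ∑ i, |a i + b i| = ∑ i, |a i| + ∑ i, sign (a i) * b i := by
  rw [← Finset.sum_add_distrib]
  exact Finset.sum_congr rfl fun i _ => abs_add_eq_of_abs_le (h i)

theorem abs_le_abs_add_of_sum_abs_add_le {a b : ι → ℤ} {C : ℤ}
    (hadd : ∑ i, |a i + b i| ≤ ∑ i, |a i| + C) (hsub : ∑ i, |a i - b i| ≤ ∑ i, |a i| + C)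
    (i : ι) : |b i| ≤ |a i| + C := by
  set e : ι → ℤ := fun j => |a j + b j| + |a j - b j| - 2 * |a j|
  have he (j : ι) : 0 ≤ e j := by
    simp only [e]
    have := abs_add_le (a j + b j) (a j - b j)
    rw [show a j + b j + (a j - b j) = 2 * a j by ring, abs_mul] at this
    norm_num at this
    omega
  have hsum : ∑ j, e j ≤ 2 * C := by
    simp only [e, Finset.sum_sub_distrib, Finset.sum_add_distrib, ← Finset.mul_sum]
    omega
  have hi : e i ≤ 2 * C := (Finset.single_le_sum (fun j _ => he j) (Finset.mem_univ i)).trans hsum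
  have h2 : |a i + b i - (a i - b i)| = 2 * |b i| := by
    rw [show a i + b i - (a i - b i) = 2 * b i by ring, abs_mul]
    norm_num
  have := abs_sub (a i + b i) (a i - b i)
  simp only [e] at hi
  omega

theorem AddSubgroup.exists_mem_forall_apply_ne_zero (A : AddSubgroup (ι → ℤ))
    (hA : ∀ i, ∃ b ∈ A, b i ≠ 0) : ∃ b ∈ A, ∀ i, b i ≠ 0 := by
  classical
  suffices ∀ s : Finset ι, ∃ b ∈ A, ∀ i ∈ s, b i ≠ 0 by
    simpa using this Finset.univ
  intro s
  induction s using Finset.induction with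
  | empty => exact ⟨0, A.zero_mem, by simp⟩
  | insert i₀ s _ ih =>
    obtain ⟨a, haA, ha⟩ := ih
    obtain ⟨b, hbA, hb⟩ := hA i₀
    -- a large multiple of `a` dominates `b` wherever `a` does not vanish
    set M : ℕ := (∑ i, |b i|).toNat + 1
    have hbM (i : ι) : |b i| < M := by
      have := Finset.single_le_sum (fun j _ => abs_nonneg (b j)) (Finset.mem_univ i)
      omega
    refine ⟨M • a + b, A.add_mem (A.nsmul_mem haA M) hbA, fun i hi hzero => ?_⟩
    have hi' : (M : ℤ) * a i = -b i := by
      rw [Pi.add_apply, Pi.smul_apply, nsmul_eq_mul] at hzero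
      linarith
    rcases eq_or_ne (a i) 0 with ha0 | ha0
    · rcases Finset.mem_insert.mp hi with rfl | hi
      · simp [ha0] at hi'
        exact hb hi'
      · exact ha i hi ha0
    · have : (M : ℤ) ≤ |(M : ℤ) * a i| := by
        rw [abs_mul, Nat.abs_cast]
        exact le_mul_of_one_le_right (by positivity) (Int.one_le_abs ha0)
      rw [hi', abs_neg] at this
      exact absurd (hbM i) (not_lt.mpr this)

theorem AddSubgroup.eventually_forall_le_abs_apply {α : Type*} {l : Filter α}
    (A : AddSubgroup (ι → ℤ)) {z : ι → ℤ} (hzA : z ∈ A) (hz : ∀ i, z i ≠ 0) (a : α → ι → ℤ)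
    (C : ℤ) (hC : ∀ b ∈ A, ∀ᶠ n in l, ∑ i, |a n i + b i| ≤ ∑ i, |a n i| + C) (M : ℤ) :
    ∀ᶠ n in l, ∀ i, M ≤ |a n i| := by
  have hm := A.zsmul_mem hzA (|M| + |C|)
  filter_upwards [hC _ hm, hC _ (A.neg_mem hm)] with n hadd hsub i
  have := abs_le_abs_add_of_sum_abs_add_le hadd (by simpa [sub_eq_add_neg] using hsub) i
  rw [Pi.smul_apply, smul_eq_mul, abs_mul, abs_of_nonneg (by positivity)] at this
  have := le_mul_of_one_le_right (by positivity : 0 ≤ |M| + |C|) (Int.one_le_abs (hz i))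
  linarith [le_abs_self M, le_abs_self C]

theorem AddSubgroup.exists_sign_pattern_orthogonal {α : Type*} {l : Filter α} [l.NeBot]
    [Nonempty ι] (A : AddSubgroup (ι → ℤ)) (hA : ∀ i, ∃ b ∈ A, b i ≠ 0) (a : α → ι → ℤ) (C : ℤ)
    (hC : ∀ b ∈ A, ∀ᶠ n in l, ∑ i, |a n i + b i| ≤ ∑ i, |a n i| + C) :
    ∃ σ : ι → SignType, (∀ b ∈ A, ∑ i, σ i * b i = 0) ∧
      ∀ M : ℤ, ∃ᶠ n in l, M ≤ ∑ i, σ i * a n i := by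
  obtain ⟨z, hzA, hz⟩ := A.exists_mem_forall_apply_ne_zero hA
  obtain ⟨σ, hσ⟩ : ∃ σ : ι → SignType, ∃ᶠ n in l, ∀ i, sign (a n i) = σ i :=
    frequently_exists.mp (Frequently.of_forall fun n => ⟨_, fun _ => rfl⟩)
  have hσa (M : ℤ) : ∃ᶠ n in l, (∀ i, sign (a n i) = σ i) ∧ ∀ i, M ≤ |a n i| :=
    hσ.and_eventually (A.eventually_forall_le_abs_apply hzA hz a C hC M)
  have hnonpos : ∀ b ∈ A, ∑ i, σ i * b i ≤ 0 := by
    intro b hb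
    by_contra! hpos
    set m := |C| + 1
    obtain ⟨n, ⟨hpat, hbig⟩, hle⟩ :=
      ((hσa (∑ i, |m * b i|)).and_eventually (hC _ (A.zsmul_mem hb m))).exists
    have hdom (i : ι) : |(m • b) i| ≤ |a n i| :=
      (Finset.single_le_sum (f := fun i => |m * b i|) (fun _ _ => abs_nonneg _)
        (Finset.mem_univ i)).trans (hbig i)
    have hgain : ∑ i, (sign (a n i) : ℤ) * (m • b) i = m * ∑ i, σ i * b i := by
      simp only [hpat, Pi.smul_apply, smul_eq_mul, Finset.mul_sum]
      exact Finset.sum_congr rfl fun i _ => by ring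
    rw [sum_abs_add_eq_of_abs_le hdom, hgain] at hle
    have := le_mul_of_one_le_right (by positivity : 0 ≤ m) hpos
    linarith [le_abs_self C]
  refine ⟨σ, fun b hb => le_antisymm (hnonpos b hb) ?_, fun M => ?_⟩
  · simpa [Finset.sum_neg_distrib] using hnonpos (-b) (A.neg_mem hb)
  · refine (hσa M).mono fun n ⟨hpat, hbig⟩ => ?_
    obtain ⟨i₀⟩ := ‹Nonempty ι›
    calc M ≤ |a n i₀| := hbig i₀
      _ ≤ ∑ i, |a n i| :=
        Finset.single_le_sum (fun i _ => abs_nonneg (a n i)) (Finset.mem_univ i₀)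
      _ = ∑ i, σ i * a n i := Finset.sum_congr rfl fun i _ => by rw [← hpat i, sign_mul_self]

end SignPattern

section MetricFunctional

variable {G : Type*} [Group G]

theorem act_mul (x y : G) (h : G → ℝ) : act (x * y) h = act x (act y h) := by
  funext w
  simp only [act, mul_inv_rev, mul_assoc]
  ring

theorem act_one {h : G → ℝ} (h1 : h 1 = 0) : act 1 h = h := by
  funext y
  simp [act, h1]

theorem neg_le_bus {d : G → G → ℝ} (hd : IsMetric d) (x y : G) : -d x 1 ≤ bus d x y := by
  simp only [bus]
  linarith [hd.1 x y]

theorem forall_ne_bus_of_not_bddBelow {d : G → G → ℝ} (hd : IsMetric d) {h : G → ℝ}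
    (hh : ¬BddBelow (Set.range h)) (x : G) : h ≠ bus d x := by
  rintro rfl
  exact hh ⟨-d x 1, by rintro _ ⟨y, rfl⟩; exact neg_le_bus hd x y⟩

theorem exists_intCast_eq_of_tendsto {u : ℕ → ℝ} {c : ℝ} (hu : Tendsto u atTop (𝓝 c))
    (hint : ∀ n, ∃ m : ℤ, (m : ℝ) = u n) : ∃ m : ℤ, (m : ℝ) = c :=
  Int.isClosedEmbedding_coe_real.isClosed_range.mem_of_tendsto hu (Eventually.of_forall hint)

theorem Subgroup.finite_range_of_forall_mul_eq {α : Type*} {K : Subgroup G} [K.FiniteIndex]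
    {f : G → α} (hf : ∀ g, ∀ k ∈ K, f (g * k) = f g) : (Set.range f).Finite := by
  refine (Set.finite_range fun q : G ⧸ K => f q.out).subset ?_
  rintro _ ⟨g, rfl⟩
  obtain ⟨k, hk⟩ := QuotientGroup.mk_out_eq_mul K g
  exact ⟨g, show f (g : G ⧸ K).out = f g by rw [hk, hf g k k.2]⟩

def actStabilizer (h : G → ℝ) (h1 : h 1 = 0) : Subgroup G where
  carrier := {x | act x h = h}
  mul_mem' {x y} hx hy := by
    simp only [Set.mem_ofPred_eq] at *
    rw [act_mul, hy, hx]
  one_mem' := act_one h1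
  inv_mem' {x} hx := by
    simp only [Set.mem_ofPred_eq] at *
    conv_lhs => rw [← hx, ← act_mul, inv_mul_cancel, act_one h1]

variable {h : G → ℝ} (h1 : h 1 = 0)

theorem map_mul_of_mem_actStabilizer {a : G} (ha : a ∈ actStabilizer h h1) (y : G) :
    h (a * y) = h a + h y := by
  have := congrFun ((actStabilizer h h1).inv_mem ha) y
  simp only [act, inv_inv] at this
  linarith

theorem finiteIndex_actStabilizer (hfin : (Set.range fun x => act x h).Finite) :
    (actStabilizer h h1).FiniteIndex := by
  have : Finite (Set.range fun x => act x h) := hfin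
  have : Finite (G ⧸ actStabilizer h h1) := by
    refine Finite.of_injective (fun q => (⟨act q.out h, q.out, rfl⟩ : Set.range fun x => act x h))
      fun q₁ q₂ hq => ?_
    rw [← QuotientGroup.out_eq' q₁, ← QuotientGroup.out_eq' q₂, QuotientGroup.eq]
    have hq' : act q₁.out h = act q₂.out h := congrArg Subtype.val hq
    change act _ h = h
    rw [act_mul, ← hq', ← act_mul, inv_mul_cancel, act_one h1]
  exact Subgroup.finiteIndex_of_finite_quotient

end MetricFunctional

section LengthDist

variable {G : Type*} [Group G]

noncomputable def lengthDist (L : G → ℤ) (x y : G) : ℝ := L (x⁻¹ * y)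

variable {L : G → ℤ}

theorem lengthDist_mul_left (x y z : G) : lengthDist L (z * x) (z * y) = lengthDist L x y := by
  simp [lengthDist, mul_inv_rev, mul_assoc]

theorem bus_lengthDist (x y : G) :
    bus (lengthDist L) x y = ((L (x⁻¹ * y) - L x⁻¹ : ℤ) : ℝ) := by
  simp [bus, lengthDist]

theorem exists_abs_sub_le_of_tendsto_bus {u : ℕ → G} {h : G → ℝ}
    (hu : ∀ y, Tendsto (fun n => bus (lengthDist L) (u n) y) atTop (𝓝 (h y))) {B : ℝ}
    (hB : ∀ x, |h x| ≤ B) :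
    ∃ C : ℤ, ∀ y, ∀ᶠ n in atTop, |L ((u n)⁻¹ * y) - L (u n)⁻¹| ≤ C := by
  refine ⟨⌈B⌉ + 1, fun y => ?_⟩
  filter_upwards [(hu y).eventually (Metric.ball_mem_nhds _ one_pos)] with n hn
  rw [Real.dist_eq, bus_lengthDist] at hn
  have : |((L ((u n)⁻¹ * y) - L (u n)⁻¹ : ℤ) : ℝ)| < ⌈B⌉ + 1 := by
    linarith [abs_sub_abs_le_abs_sub (((L ((u n)⁻¹ * y) - L (u n)⁻¹ : ℤ) : ℝ)) (h y), hB y,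
      Int.le_ceil B]
  exact_mod_cast this.le

section Axioms

variable (hL0 : ∀ g, L g = 0 ↔ g = 1) (hLinv : ∀ g, L g⁻¹ = L g)
  (hLmul : ∀ g h, L (g * h) ≤ L g + L h)
include hL0 hLinv hLmul

theorem nonneg_of_length (g : G) : 0 ≤ L g := by
  have := hLmul g g⁻¹
  rw [mul_inv_cancel, (hL0 1).mpr rfl, hLinv] at this
  omega

theorem isMetric_lengthDist : IsMetric (lengthDist L) := by
  refine ⟨fun x y => ?_, fun x y => ?_, fun x y => ?_, fun x y z => ?_⟩
  · simp only [lengthDist]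
    exact_mod_cast nonneg_of_length hL0 hLinv hLmul _
  · simp [lengthDist, hL0, inv_mul_eq_one]
  · simp [lengthDist, ← hLinv (x⁻¹ * y)]
  · have := hLmul (x⁻¹ * y) (y⁻¹ * z)
    simp only [lengthDist, mul_assoc, mul_inv_cancel_left] at this ⊢
    exact_mod_cast this

theorem exists_nat_lengthDist_eq (x y : G) : ∃ n : ℕ, lengthDist L x y = n :=
  ⟨(L (x⁻¹ * y)).toNat, by
    simp only [lengthDist]
    exact_mod_cast (Int.toNat_of_nonneg (nonneg_of_length hL0 hLinv hLmul _)).symm⟩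

end Axioms

variable {S : Set G} (hS : FinSymGen S) (hwL : ∀ g, (wordLength S g : ℤ) ≤ L g)
include hS hwL

theorem finite_setOf_lengthDist_le (r : ℝ) : {x : G | lengthDist L x 1 ≤ r}.Finite := by
  refine (WordLength.finite_setOf_wordLength_le hS.2.1 hS.2.2 hS.1 ⌈r⌉₊).inv.subset
    fun x hx => ?_
  simp only [lengthDist, mul_one, Set.mem_ofPred_eq] at hx
  have : (wordLength S x⁻¹ : ℝ) ≤ ⌈r⌉₊ :=
    (le_trans (by exact_mod_cast hwL x⁻¹) hx).trans (Nat.le_ceil r)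
  exact_mod_cast this

theorem qiToCayley_lengthDist {C : ℤ} (hC : 1 ≤ C) (hLw : ∀ g, L g ≤ C * wordLength S g) :
    QIToCayley (lengthDist L) := by
  have hC' : (1 : ℝ) ≤ C := by exact_mod_cast hC
  refine ⟨S, hS, id, C, by linarith, fun y => ⟨y, by simp [wordDist]; linarith⟩, fun x y => ?_⟩
  have hw : wordDist S x y ≤ lengthDist L x y := by
    simp only [wordDist, lengthDist]
    exact_mod_cast hwL _
  have hL : lengthDist L x y ≤ C * wordDist S x y := by
    simp only [wordDist, lengthDist]
    exact_mod_cast hLw _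
  have hw0 : 0 ≤ wordDist S x y := by simp [wordDist]
  have : (C : ℝ)⁻¹ * lengthDist L x y ≤ wordDist S x y := by
    rw [inv_mul_le_iff₀ (by linarith)]
    exact hL
  simp only [id]
  constructor <;> nlinarith

end LengthDist

namespace Induced

variable {G : Type*} [Group G] (H : Subgroup G)

noncomputable def transversalCocycle (g : G) (ω : G ⧸ H) : G := (g • ω).out⁻¹ * g * ω.out

theorem transversalCocycle_mem (g : G) (ω : G ⧸ H) : transversalCocycle H g ω ∈ H := by
  have : (((g • ω).out : G) : G ⧸ H) = ((g * ω.out : G) : G ⧸ H) := by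
    rw [QuotientGroup.out_eq', ← smul_eq_mul, ← MulAction.Quotient.smul_mk, QuotientGroup.out_eq']
  simpa [transversalCocycle, mul_assoc] using QuotientGroup.eq.mp this

theorem transversalCocycle_mul (g h : G) (ω : G ⧸ H) : transversalCocycle H (g * h) ω =
    transversalCocycle H g (h • ω) * transversalCocycle H h ω := by
  simp only [transversalCocycle, mul_smul]
  group

theorem smul_eq_self_of_mem_normalCore {k : G} (hk : k ∈ H.normalCore) (ω : G ⧸ H) :
    k • ω = ω := by
  rw [Subgroup.normalCore_eq_ker, MonoidHom.mem_ker] at hk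
  exact congrArg (fun σ : Equiv.Perm (G ⧸ H) => σ ω) hk

theorem transversalCocycle_conj_out {a : G} (ha : a ∈ H) (ω : G ⧸ H) :
    transversalCocycle H (ω.out * a * ω.out⁻¹) ω = a := by
  have : (ω.out * a * ω.out⁻¹) • ω = ω :=
    calc (ω.out * a * ω.out⁻¹) • ω = (ω.out * a * ω.out⁻¹) • ((ω.out : G) : G ⧸ H) := by
          rw [QuotientGroup.out_eq']
      _ = ((ω.out * a : G) : G ⧸ H) := by
          rw [MulAction.Quotient.smul_mk, smul_eq_mul, inv_mul_cancel_right]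
      _ = ω := by rw [QuotientGroup.mk_mul_of_mem _ ha, QuotientGroup.out_eq']
  rw [transversalCocycle, this]
  group

noncomputable def inducedCocycle (φ : G → ℤ) (g : G) (ω : G ⧸ H) : ℤ :=
  φ (transversalCocycle H g ω)

variable {H} {φ : G → ℤ} (hφ : ∀ a b, a ∈ H → b ∈ H → φ (a * b) = φ a + φ b)
include hφ

theorem map_one_of_add : φ 1 = 0 := by
  simpa using hφ 1 1 H.one_mem H.one_mem

theorem map_pow_of_add {a : G} (ha : a ∈ H) (n : ℕ) : φ (a ^ n) = n * φ a := by
  induction n with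
  | zero => simp [map_one_of_add hφ]
  | succ k ih =>
    rw [pow_succ, hφ _ _ (pow_mem ha k) ha, ih]
    push_cast
    ring

theorem inducedCocycle_mul (g h : G) (ω : G ⧸ H) :
    inducedCocycle H φ (g * h) ω = inducedCocycle H φ g (h • ω) + inducedCocycle H φ h ω := by
  rw [inducedCocycle, transversalCocycle_mul]
  exact hφ _ _ (transversalCocycle_mem H g _) (transversalCocycle_mem H h ω)

theorem inducedCocycle_one (ω : G ⧸ H) : inducedCocycle H φ 1 ω = 0 := by
  simp [inducedCocycle, transversalCocycle, map_one_of_add hφ]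

theorem inducedCocycle_inv (g : G) (ω : G ⧸ H) :
    inducedCocycle H φ g⁻¹ ω = -inducedCocycle H φ g (g⁻¹ • ω) := by
  have := inducedCocycle_mul hφ g g⁻¹ ω
  rw [mul_inv_cancel, inducedCocycle_one hφ] at this
  omega

theorem inducedCocycle_mul_of_mem_normalCore (g : G) {k : G} (hk : k ∈ H.normalCore)
    (ω : G ⧸ H) :
    inducedCocycle H φ (g * k) ω = inducedCocycle H φ g ω + inducedCocycle H φ k ω := by
  rw [inducedCocycle_mul hφ, smul_eq_self_of_mem_normalCore H hk]

theorem inducedCocycle_pow_of_mem_normalCore {k : G} (hk : k ∈ H.normalCore) (n : ℕ)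
    (ω : G ⧸ H) : inducedCocycle H φ (k ^ n) ω = n * inducedCocycle H φ k ω := by
  induction n with
  | zero => simp [inducedCocycle_one hφ]
  | succ n ih =>
    rw [pow_succ, inducedCocycle_mul_of_mem_normalCore hφ _ hk, ih]
    push_cast
    ring

theorem inducedCocycle_pow_mul {z : G} (hz : z ∈ H.normalCore) (n : ℕ) (y : G) (ω : G ⧸ H) :
    inducedCocycle H φ (z ^ n * y) ω =
      n * inducedCocycle H φ z (y • ω) + inducedCocycle H φ y ω := by
  rw [inducedCocycle_mul hφ, inducedCocycle_pow_of_mem_normalCore hφ hz]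

def coreImage : AddSubgroup (G ⧸ H → ℤ) where
  carrier := {b | ∃ k ∈ H.normalCore, inducedCocycle H φ k = b}
  add_mem' := by
    rintro _ _ ⟨k, hk, rfl⟩ ⟨k', hk', rfl⟩
    exact ⟨k * k', mul_mem hk hk', funext (inducedCocycle_mul_of_mem_normalCore hφ k hk')⟩
  zero_mem' := ⟨1, one_mem _, funext (inducedCocycle_one hφ)⟩
  neg_mem' := by
    rintro _ ⟨k, hk, rfl⟩
    refine ⟨k⁻¹, inv_mem hk, funext fun ω => ?_⟩
    rw [inducedCocycle_inv hφ, smul_eq_self_of_mem_normalCore H (inv_mem hk)]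
    rfl

theorem exists_mem_coreImage_apply_ne_zero [H.FiniteIndex] {a : G} (ha : a ∈ H)
    (hφa : φ a ≠ 0) (ω : G ⧸ H) : ∃ b ∈ coreImage hφ, b ω ≠ 0 := by
  have hcore : a ^ H.normalCore.index ∈ H.normalCore := H.normalCore.pow_index_mem a
  refine ⟨_, ⟨_, H.normalCore_normal.conj_mem _ hcore ω.out, rfl⟩, ?_⟩
  rw [inducedCocycle, transversalCocycle_conj_out H (pow_mem ha _), map_pow_of_add hφ ha]
  exact mul_ne_zero (by exact_mod_cast Subgroup.FiniteIndex.index_ne_zero) hφa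

omit hφ

theorem sum_comp_smul [Fintype (G ⧸ H)] (f : G ⧸ H → ℤ) (g : G) :
    ∑ ω, f (g • ω) = ∑ ω, f ω :=
  Equiv.sum_comp (MulAction.toPerm g) f

variable [Fintype (G ⧸ H)]

include hφ in
theorem finite_range_sum_mul_inducedCocycle {σ : G ⧸ H → ℤ}
    (horth : ∀ b ∈ coreImage hφ, ∑ ω, σ ω * b ω = 0) :
    (Set.range fun g => ∑ ω, σ ω * inducedCocycle H φ g ω).Finite := by
  have : H.FiniteIndex := Subgroup.finiteIndex_of_finite_quotient
  refine Subgroup.finite_range_of_forall_mul_eq (K := H.normalCore) fun g k hk => ?_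
  simp only [inducedCocycle_mul_of_mem_normalCore hφ g hk, mul_add, Finset.sum_add_distrib,
    horth _ ⟨k, hk, rfl⟩, add_zero]

variable (H φ) in
noncomputable def inducedNorm (g : G) : ℤ := ∑ ω, |inducedCocycle H φ g ω|

theorem inducedNorm_nonneg (g : G) : 0 ≤ inducedNorm H φ g :=
  Finset.sum_nonneg fun _ _ => abs_nonneg _

theorem abs_inducedCocycle_le (g : G) (ω : G ⧸ H) :
    |inducedCocycle H φ g ω| ≤ inducedNorm H φ g :=
  Finset.single_le_sum (f := fun ω => |inducedCocycle H φ g ω|) (fun _ _ => abs_nonneg _)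
    (Finset.mem_univ ω)

theorem one_le_inducedNorm {z : G} (hz0 : ∀ ω, inducedCocycle H φ z ω ≠ 0) :
    1 ≤ inducedNorm H φ z :=
  (Int.one_le_abs (hz0 (1 : G))).trans (abs_inducedCocycle_le z _)

include hφ

theorem inducedNorm_one : inducedNorm H φ 1 = 0 := by
  simp [inducedNorm, inducedCocycle_one hφ]

theorem inducedNorm_mul_le (g h : G) :
    inducedNorm H φ (g * h) ≤ inducedNorm H φ g + inducedNorm H φ h := by
  calc inducedNorm H φ (g * h)
      ≤ ∑ ω, (|inducedCocycle H φ g (h • ω)| + |inducedCocycle H φ h ω|) :=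
        Finset.sum_le_sum fun ω _ => by rw [inducedCocycle_mul hφ]; exact abs_add_le _ _
    _ = inducedNorm H φ g + inducedNorm H φ h := by
        rw [Finset.sum_add_distrib, sum_comp_smul (fun ω => |inducedCocycle H φ g ω|)]
        rfl

theorem inducedNorm_inv (g : G) : inducedNorm H φ g⁻¹ = inducedNorm H φ g := by
  simp only [inducedNorm, inducedCocycle_inv hφ, abs_neg]
  exact sum_comp_smul (fun ω => |inducedCocycle H φ g ω|) g⁻¹

theorem inducedNorm_mul_of_mem_normalCore (g : G) {k : G} (hk : k ∈ H.normalCore) :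
    inducedNorm H φ (g * k) = ∑ ω, |inducedCocycle H φ g ω + inducedCocycle H φ k ω| := by
  simp only [inducedNorm, inducedCocycle_mul_of_mem_normalCore hφ g hk]

theorem inducedNorm_pow_of_mem_normalCore {k : G} (hk : k ∈ H.normalCore) (n : ℕ) :
    inducedNorm H φ (k ^ n) = n * inducedNorm H φ k := by
  simp [inducedNorm, inducedCocycle_pow_of_mem_normalCore hφ hk, abs_mul, Finset.mul_sum]

theorem inducedNorm_pow_mul {z : G} (hz : z ∈ H.normalCore)
    (hz0 : ∀ ω, inducedCocycle H φ z ω ≠ 0) {n : ℕ} {y : G} (hn : inducedNorm H φ y < n) :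
    inducedNorm H φ (z ^ n * y) = n * inducedNorm H φ z +
      ∑ ω, sign (inducedCocycle H φ z (y • ω)) * inducedCocycle H φ y ω := by
  have hdom (ω : G ⧸ H) : |inducedCocycle H φ y ω| ≤ |n * inducedCocycle H φ z (y • ω)| := by
    rw [abs_mul, Nat.abs_cast]
    have := abs_inducedCocycle_le (φ := φ) y ω
    have := le_mul_of_one_le_right (by positivity : (0 : ℤ) ≤ n) (Int.one_le_abs (hz0 (y • ω)))
    omega
  have hn0 : (0 : ℤ) < n := lt_of_le_of_lt (inducedNorm_nonneg y) hn
  simp only [inducedNorm, inducedCocycle_pow_mul hφ hz, sum_abs_add_eq_of_abs_le hdom, abs_mul,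
    sign_mul, sign_pos hn0, one_mul, Nat.abs_cast, ← Finset.mul_sum]
  rw [sum_comp_smul (fun ω => |inducedCocycle H φ z ω|) y]

end Induced

section BanachLength

open Induced WordLength

variable {G : Type*} [Group G]

noncomputable def banachLength (S : Set G) (H : Subgroup G) [Fintype (G ⧸ H)] (φ : G → ℤ)
    (R : ℤ) (g : G) : ℤ :=
  max (wordLength S g : ℤ) (R * inducedNorm H φ g)

variable {S : Set G} {H : Subgroup G} [Fintype (G ⧸ H)] {φ : G → ℤ} {R : ℤ}
  (hS : FinSymGen S) (hφ : ∀ a b, a ∈ H → b ∈ H → φ (a * b) = φ a + φ b)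
include hS hφ

theorem banachLength_eq_zero_iff (g : G) : banachLength S H φ R g = 0 ↔ g = 1 := by
  constructor
  · intro h
    have := le_max_left (wordLength S g : ℤ) (R * inducedNorm H φ g)
    exact eq_one_of_wordLength_eq_zero hS.2.1 hS.2.2 (by simp only [banachLength] at h; omega)
  · rintro rfl
    simp [banachLength, inducedNorm_one hφ]

theorem banachLength_inv (g : G) : banachLength S H φ R g⁻¹ = banachLength S H φ R g := by
  simp [banachLength, wordLength_inv hS.2.1 hS.2.2, inducedNorm_inv hφ]

theorem banachLength_mul_le (hR : 0 ≤ R) (g h : G) :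
    banachLength S H φ R (g * h) ≤ banachLength S H φ R g + banachLength S H φ R h := by
  have hw := wordLength_mul_le hS.2.1 hS.2.2 g h
  have hn := mul_le_mul_of_nonneg_left (inducedNorm_mul_le hφ g h) hR
  simp only [banachLength, max_le_iff]
  constructor
  · linarith [le_max_left (wordLength S g : ℤ) (R * inducedNorm H φ g),
      le_max_left (wordLength S h : ℤ) (R * inducedNorm H φ h)]
  · linarith [le_max_right (wordLength S g : ℤ) (R * inducedNorm H φ g),
      le_max_right (wordLength S h : ℤ) (R * inducedNorm H φ h)]

theorem not_forall_eventually_abs_banachLength_sub_le (hA : ∀ ω, ∃ b ∈ coreImage hφ, b ω ≠ 0)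
    (hR : 1 ≤ R) (v : ℕ → G) (C : ℤ) :
    ¬ ∀ y, ∀ᶠ n in atTop, |banachLength S H φ R (v n * y) - banachLength S H φ R (v n)| ≤ C := by
  intro hC
  obtain ⟨Λ, hΛ0, hΛ⟩ := exists_le_mul_wordLength hS.2.1 hS.2.2 hS.1 (inducedNorm_one hφ)
    (inducedNorm_mul_le hφ)
  obtain ⟨D, hD⟩ := exists_eventually_wordLength_lt hS.2.1 hS.2.2
    (F := fun g => R * inducedNorm H φ g) (fun g => mul_nonneg (by omega) (inducedNorm_nonneg g))
    (fun g h => by nlinarith [inducedNorm_mul_le hφ g h]) (Λ := R * Λ) (by positivity)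
    (fun g => by nlinarith [hΛ g]) hS.1 hC
  -- eventually the `ℓ¹` part dominates, so it inherits bounded increments
  have hinc (y : G) : ∀ᶠ n in atTop,
      inducedNorm H φ (v n * y) ≤ inducedNorm H φ (v n) + (|C| + |D|) := by
    filter_upwards [hC y, hD] with n h1 h2
    simp only [banachLength, abs_le] at h1
    have := le_max_right (wordLength S (v n * y) : ℤ) (R * inducedNorm H φ (v n * y))
    have : max (wordLength S (v n) : ℤ) (R * inducedNorm H φ (v n)) ≤
        R * inducedNorm H φ (v n) + |D| :=
      max_le (by linarith [le_abs_self D]) (by linarith [abs_nonneg D])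
    rcases le_or_gt (inducedNorm H φ (v n * y)) (inducedNorm H φ (v n)) with h | h
    · linarith [abs_nonneg C, abs_nonneg D]
    · nlinarith [le_abs_self C]
  obtain ⟨σ, horth, hfreq⟩ := (coreImage hφ).exists_sign_pattern_orthogonal hA
    (fun n => inducedCocycle H φ (v n)) (|C| + |D|) (by
      rintro _ ⟨k, hk, rfl⟩
      filter_upwards [hinc k] with n hn
      rwa [← inducedNorm_mul_of_mem_normalCore hφ _ hk])
  obtain ⟨M, hM⟩ := (finite_range_sum_mul_inducedCocycle hφ horth).bddAbove
  obtain ⟨n, hn⟩ := (hfreq (M + 1)).exists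
  linarith [hM ⟨v n, rfl⟩]

theorem isBanachMetric_banachLength (hA : ∀ ω, ∃ b ∈ coreImage hφ, b ω ≠ 0) (hR : 1 ≤ R) :
    IsBanachMetric (lengthDist (banachLength S H φ R)) := by
  have hL0 := banachLength_eq_zero_iff (R := R) hS hφ
  have hLinv := banachLength_inv (R := R) hS hφ
  have hLmul := banachLength_mul_le hS hφ (by omega : 0 ≤ R)
  have hwL (g : G) : (wordLength S g : ℤ) ≤ banachLength S H φ R g := le_max_left _ _
  obtain ⟨Λ, hΛ0, hΛ⟩ := exists_le_mul_wordLength hS.2.1 hS.2.2 hS.1 (inducedNorm_one hφ)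
    (inducedNorm_mul_le hφ)
  have hLw (g : G) : banachLength S H φ R g ≤ (R * Λ + 1) * wordLength S g := by
    have := mul_le_mul_of_nonneg_left (hΛ g) (by omega : 0 ≤ R)
    refine max_le ?_ ?_ <;> nlinarith [(by positivity : (0 : ℤ) ≤ R * Λ * wordLength S g)]
  refine ⟨isMetric_lengthDist hL0 hLinv hLmul, exists_nat_lengthDist_eq hL0 hLinv hLmul,
    lengthDist_mul_left, finite_setOf_lengthDist_le hS hwL,
    qiToCayley_lengthDist hS hwL (by nlinarith) hLw, ?_⟩
  rintro h ⟨⟨u, hu⟩, -⟩ ⟨B, hB⟩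
  obtain ⟨C, hC⟩ := exists_abs_sub_le_of_tendsto_bus hu hB
  exact not_forall_eventually_abs_banachLength_sub_le hS hφ hA hR _ C hC

end BanachLength

section Horofunction

open Induced WordLength

variable {G : Type*} [Group G] (H : Subgroup G) [Fintype (G ⧸ H)] (φ : G → ℤ)

noncomputable def horofunction (R : ℤ) (s : G ⧸ H → ℤ) (y : G) : ℝ :=
  ((R * ∑ ω, s (y • ω) * inducedCocycle H φ y ω : ℤ) : ℝ)

variable {H φ} (hφ : ∀ a b, a ∈ H → b ∈ H → φ (a * b) = φ a + φ b)
include hφ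

theorem act_horofunction (R : ℤ) (s : G ⧸ H → ℤ) (x : G) :
    act x (horofunction H φ R s) = horofunction H φ R (fun ω => s (x⁻¹ • ω)) := by
  funext y
  have hsplit : ∑ ω, s ((x⁻¹ * y) • ω) * inducedCocycle H φ (x⁻¹ * y) ω =
      ∑ ω, s (x⁻¹ • ω) * inducedCocycle H φ x⁻¹ ω +
        ∑ ω, s (x⁻¹ • y • ω) * inducedCocycle H φ y ω := by
    simp only [inducedCocycle_mul hφ, mul_smul, mul_add, Finset.sum_add_distrib]
    rw [sum_comp_smul (fun ω => s (x⁻¹ • ω) * inducedCocycle H φ x⁻¹ ω) y]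
  simp only [act, horofunction, hsplit]
  push_cast
  ring

theorem finite_range_act_horofunction (R : ℤ) (s : G ⧸ H → ℤ) :
    (Set.range fun x => act x (horofunction H φ R s)).Finite := by
  refine (Set.finite_range fun e : G ⧸ H → G ⧸ H => horofunction H φ R (s ∘ e)).subset ?_
  rintro _ ⟨x, rfl⟩
  exact ⟨fun ω => x⁻¹ • ω, (act_horofunction hφ R s x).symm⟩

theorem horofunction_inv_pow {z : G} (hz : z ∈ H.normalCore) (R : ℤ) (n : ℕ) :
    horofunction H φ R (fun ω => sign (inducedCocycle H φ z ω)) (z ^ n)⁻¹ =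
      ((-(R * (n * inducedNorm H φ z)) : ℤ) : ℝ) := by
  rw [horofunction, Int.cast_inj]
  simp only [smul_eq_self_of_mem_normalCore H (inv_mem (pow_mem hz n)), inducedCocycle_inv hφ,
    inducedCocycle_pow_of_mem_normalCore hφ hz, inducedNorm, Finset.mul_sum,
    ← Finset.sum_neg_distrib, ← sign_mul_self]
  exact Finset.sum_congr rfl fun ω _ => by ring

variable {S : Set G} (hS : FinSymGen S) {z : G} (hz : z ∈ H.normalCore)
  (hz0 : ∀ ω, inducedCocycle H φ z ω ≠ 0) {R : ℤ} (hR : (wordLength S z : ℤ) < R)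
include hS hz hz0 hR

theorem banachLength_pow (n : ℕ) :
    banachLength S H φ R (z ^ n) = R * (n * inducedNorm H φ z) := by
  rw [banachLength, inducedNorm_pow_of_mem_normalCore hφ hz, max_eq_right]
  have h1 : (wordLength S (z ^ n) : ℤ) ≤ n * wordLength S z := by
    exact_mod_cast wordLength_pow_le hS.2.1 hS.2.2 z n
  have hn : (0 : ℤ) ≤ n := by positivity
  have h2 : (n : ℤ) * wordLength S z ≤ n * R := mul_le_mul_of_nonneg_left hR.le hn
  have h3 : (n : ℤ) * R ≤ n * R * inducedNorm H φ z :=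
    le_mul_of_one_le_right (mul_nonneg hn (by omega)) (one_le_inducedNorm hz0)
  linarith

theorem eventually_banachLength_pow_mul_sub (y : G) : ∀ᶠ n : ℕ in atTop,
    banachLength S H φ R (z ^ n * y) - banachLength S H φ R (z ^ n) =
      R * ∑ ω, sign (inducedCocycle H φ z (y • ω)) * inducedCocycle H φ y ω := by
  have hy0 := inducedNorm_nonneg (H := H) (φ := φ) y
  have hR0 : 0 ≤ R := by omega
  have hRy := mul_nonneg hR0 hy0
  filter_upwards [eventually_gt_atTop
    (inducedNorm H φ y + wordLength S y + R * inducedNorm H φ y).toNat] with n hn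
  replace hn : inducedNorm H φ y + wordLength S y + R * inducedNorm H φ y < n := by omega
  have hP : -inducedNorm H φ y ≤
      ∑ ω, sign (inducedCocycle H φ z (y • ω)) * inducedCocycle H φ y ω := by
    rw [inducedNorm, ← Finset.sum_neg_distrib]
    exact Finset.sum_le_sum fun ω _ => neg_abs_le_sign_mul _ _
  have hw : (wordLength S (z ^ n * y) : ℤ) ≤ n * wordLength S z + wordLength S y := by
    exact_mod_cast (wordLength_mul_le hS.2.1 hS.2.2 (z ^ n) y).trans
      (Nat.add_le_add_right (wordLength_pow_le hS.2.1 hS.2.2 z n) _)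
  rw [banachLength_pow hφ hS hz hz0 hR, banachLength, inducedNorm_pow_mul hφ hz hz0 (by omega),
    max_eq_right]
  · ring
  · have h3 : (n : ℤ) * wordLength S z + n ≤ n * R := by nlinarith
    have h4 : R * n * 1 ≤ R * n * inducedNorm H φ z :=
      mul_le_mul_of_nonneg_left (one_le_inducedNorm hz0) (mul_nonneg hR0 (by positivity))
    nlinarith

theorem inBoundary_horofunction :
    InBoundary (lengthDist (banachLength S H φ R))
      (horofunction H φ R fun ω => sign (inducedCocycle H φ z ω)) := by
  have hR0 : 0 ≤ R := by omega
  have hd := isMetric_lengthDist (banachLength_eq_zero_iff hS hφ) (banachLength_inv hS hφ)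
    (banachLength_mul_le hS hφ hR0)
  refine ⟨⟨fun n => (z ^ n)⁻¹, fun y => tendsto_const_nhds.congr' ?_⟩,
    forall_ne_bus_of_not_bddBelow hd ?_⟩
  · filter_upwards [eventually_banachLength_pow_mul_sub hφ hS hz hz0 hR y] with n hn
    rw [bus_lengthDist, inv_inv, hn, horofunction]
  · rintro ⟨M, hM⟩
    set n := ⌈-M⌉₊ + 1
    have hle : -(R * (n * inducedNorm H φ z)) ≤ -(n : ℤ) := by
      have := mul_le_mul_of_nonneg_right (by omega : (1 : ℤ) ≤ R) (by positivity : (0 : ℤ) ≤ n)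
      have := mul_le_mul_of_nonneg_left (one_le_inducedNorm hz0)
        (by positivity : (0 : ℤ) ≤ R * n)
      linarith
    have hMn := hM ⟨(z ^ n)⁻¹, rfl⟩
    rw [horofunction_inv_pow hφ hz] at hMn
    have hle' : ((-(R * (n * inducedNorm H φ z)) : ℤ) : ℝ) ≤ -(n : ℝ) := by exact_mod_cast hle
    have : -M < n := by
      have := Nat.le_ceil (-M)
      simp only [n]
      push_cast
      linarith
    linarith

end Horofunction

section Main

open Induced WordLength

variable {G : Type*} [Group G]

theorem exists_isVirtualHom_of_finite_range_act {d : G → G → ℝ} (hd : IsBanachMetric d)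
    {h : G → ℝ} (hh : InBoundary d h) (hfin : (Set.range fun x => act x h).Finite) :
    ∃ φ : G → ℤ, IsVirtualHom φ := by
  obtain ⟨u, hu⟩ := hh.1
  have h1 : h 1 = 0 := tendsto_nhds_unique (hu 1) (by simp [bus])
  have hint (y : G) : ∃ m : ℤ, (m : ℝ) = h y := by
    refine exists_intCast_eq_of_tendsto (hu y) fun n => ?_
    obtain ⟨k₁, hk₁⟩ := hd.2.1 (u n) y
    obtain ⟨k₂, hk₂⟩ := hd.2.1 (u n) 1
    exact ⟨k₁ - k₂, by simp [bus, hk₁, hk₂]⟩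
  choose φ hφ using hint
  set K := actStabilizer h h1
  have : K.FiniteIndex := finiteIndex_actStabilizer h1 hfin
  refine ⟨φ, K, this, fun a b ha _ => ?_, ?_⟩
  · have : ((φ (a * b) : ℤ) : ℝ) = φ a + φ b := by
      rw [hφ, hφ, hφ, map_mul_of_mem_actStabilizer h1 ha]
    exact_mod_cast this
  · by_contra! hzero
    -- `h` vanishes on `K`, so it is constant on the cosets `K * y` and takes finitely many values
    have hrange : (Set.range fun g => |h g⁻¹|).Finite :=
      Subgroup.finite_range_of_forall_mul_eq (K := K) fun g k hk => by
        rw [mul_inv_rev, map_mul_of_mem_actStabilizer h1 (K.inv_mem hk), ← hφ k⁻¹,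
          hzero _ (K.inv_mem hk), Int.cast_zero, zero_add]
    obtain ⟨B, hB⟩ := hrange.bddAbove
    exact hd.2.2.2.2.2 h hh ⟨B, fun x => by simpa using hB ⟨x⁻¹, rfl⟩⟩

theorem exists_finSymGen [Group.FG G] : ∃ S : Set G, FinSymGen S := by
  obtain ⟨S, hS, hfin⟩ := Group.fg_iff.mp ‹Group.FG G›
  refine ⟨S ∪ S⁻¹, hfin.union hfin.inv, fun s hs => ?_, ?_⟩
  · rwa [← Set.mem_inv, Set.union_inv, inv_inv, Set.union_comm]
  · exact eq_top_mono (Subgroup.closure_mono Set.subset_union_left) hS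

theorem exists_banachMetric_finiteOrbit_of_isVirtualHom [Group.FG G] {φ : G → ℤ}
    (hφ : IsVirtualHom φ) : ∃ d : G → G → ℝ, IsBanachMetric d ∧
      ∃ h : G → ℝ, InBoundary d h ∧ (Set.range fun x : G => act x h).Finite := by
  obtain ⟨H, hH, hadd, a, ha, hφa⟩ := hφ
  have : Fintype (G ⧸ H) := Fintype.ofFinite _
  obtain ⟨S, hS⟩ := exists_finSymGen (G := G)
  have hA := exists_mem_coreImage_apply_ne_zero hadd ha hφa
  obtain ⟨_, ⟨z, hz, rfl⟩, hz0⟩ := (coreImage hadd).exists_mem_forall_apply_ne_zero hA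
  have hR : (wordLength S z : ℤ) < wordLength S z + 1 := lt_add_one _
  exact ⟨_, isBanachMetric_banachLength hS hadd hA (by omega), _,
    inBoundary_horofunction hadd hS hz hz0 hR, finite_range_act_horofunction hadd _ _⟩

end Main

theorem exists_virtualHom_iff_exists_banachMetric_finiteOrbit_general
    {G : Type*} [Group G] [Group.FG G] :
    (∃ φ : G → ℤ, IsVirtualHom φ) ↔
      ∃ d : G → G → ℝ, IsBanachMetric d ∧
        ∃ h : G → ℝ, InBoundary d h ∧ (Set.range fun x : G => act x h).Finite :=
  ⟨fun ⟨_, hφ⟩ => exists_banachMetric_finiteOrbit_of_isVirtualHom hφ,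
    fun ⟨_, hd, _, hh, hfin⟩ => exists_isVirtualHom_of_finite_range_act hd hh hfin⟩

/-- A finitely generated infinite group `G` admits a virtual
homomorphism iff there is a Banach metric `d` on `G` and a metric functional
`h ∈ ∂(G,d)` with finite orbit under the `G`-action. -/
theorem exists_virtualHom_iff_exists_banachMetric_finiteOrbit
    {G : Type*} [Group G] [Group.FG G] [Infinite G] :
    (∃ φ : G → ℤ, IsVirtualHom φ) ↔
      ∃ d : G → G → ℝ, IsBanachMetric d ∧
        ∃ h : G → ℝ, InBoundary d h ∧ (Set.range fun x : G => act x h).Finite :=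
  exists_virtualHom_iff_exists_banachMetric_finiteOrbit_general
end

section
/- Let G be a finitely generated infinite group that admits a surjective group homomorphism onto ℤ. Then there exists a Banach metric d on G and a metric functional h ∈ ∂(G,d) that is a fixed point of the G-action, i.e. x.h = h for all x ∈ G. -/
open Filter Topology

/-! Let `φ : G → ℤ` be the given surjection, `g` an element with `φ g = 1`, and `U` a finite
symmetric generating set containing `g` on which `|φ| ≤ 1`. The length
`ρ z = max (|φ z|, ⌈|z|_U / 2⌉)` gives a left-invariant integer-valued metric bi-Lipschitz to the
word metric. Along `gⁿ` its Busemann functions converge to `-φ`, which is fixed by the action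
because `φ` is a homomorphism, and is not a Busemann function because it is unbounded below.
Every metric functional `h = lim b_{uₙ}` is unbounded: if the word part of `ρ uₙ⁻¹` frequently
exceeds `|φ uₙ⁻¹|` by `3t`, cutting geodesic words for `uₙ⁻¹` gives points `p` of a fixed finite
ball with `b_{uₙ}(p) ≤ -t`, and one of them occurs infinitely often; otherwise eventually
`ρ uₙ⁻¹ ≤ |φ uₙ⁻¹| + D`, and then `max (h gᵏ) (h g⁻ᵏ) ≥ k - D`. -/

section WordLength

variable {G : Type*} [Group G] {U : Set G}

theorem wordLength_list_prod_le {l : List G} (hl : ∀ s ∈ l, s ∈ U) :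
    wordLength U l.prod ≤ l.length :=
  Nat.sInf_le ⟨l, hl, rfl, rfl⟩

theorem exists_list_length_eq_wordLength (hsymm : ∀ s ∈ U, s⁻¹ ∈ U)
    (hgen : Subgroup.closure U = ⊤) (z : G) :
    ∃ l : List G, (∀ s ∈ l, s ∈ U) ∧ l.length = wordLength U z ∧ l.prod = z := by
  have hz : z ∈ Submonoid.closure (U ∪ U⁻¹) := by
    rw [← Subgroup.closure_toSubmonoid, hgen]
    trivial
  obtain ⟨l, hl, rfl⟩ := Submonoid.exists_list_of_mem_closure hz
  refine Nat.sInf_mem (s := {n | ∃ l' : List G, (∀ s ∈ l', s ∈ U) ∧ l'.length = n ∧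
    l'.prod = l.prod}) ⟨l.length, l, fun s hs => ?_, rfl, rfl⟩
  rcases hl s hs with h | h
  exacts [h, inv_inv s ▸ hsymm _ h]

theorem wordLength_one : wordLength U (1 : G) = 0 :=
  Nat.le_zero.mp (by simpa using wordLength_list_prod_le (U := U) (l := []) (by simp))

theorem wordLength_pow_le {s : G} (hs : s ∈ U) (n : ℕ) : wordLength U (s ^ n) ≤ n := by
  simpa using wordLength_list_prod_le (l := List.replicate n s)
    (fun t ht => List.eq_of_mem_replicate ht ▸ hs)

theorem eq_one_of_wordLength_eq_zero (hsymm : ∀ s ∈ U, s⁻¹ ∈ U)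
    (hgen : Subgroup.closure U = ⊤) {z : G} (hz : wordLength U z = 0) : z = 1 := by
  obtain ⟨l, -, hlen, rfl⟩ := exists_list_length_eq_wordLength hsymm hgen z
  rw [hz, List.length_eq_zero_iff] at hlen
  rw [hlen, List.prod_nil]

theorem wordLength_mul_le (hsymm : ∀ s ∈ U, s⁻¹ ∈ U) (hgen : Subgroup.closure U = ⊤)
    (a b : G) : wordLength U (a * b) ≤ wordLength U a + wordLength U b := by
  obtain ⟨la, hla, hlena, rfl⟩ := exists_list_length_eq_wordLength hsymm hgen a
  obtain ⟨lb, hlb, hlenb, rfl⟩ := exists_list_length_eq_wordLength hsymm hgen b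
  rw [← hlena, ← hlenb, ← List.length_append, ← List.prod_append]
  exact wordLength_list_prod_le fun s hs => (List.mem_append.mp hs).elim (hla s) (hlb s)

theorem wordLength_inv_le (hsymm : ∀ s ∈ U, s⁻¹ ∈ U) (hgen : Subgroup.closure U = ⊤)
    (z : G) : wordLength U z⁻¹ ≤ wordLength U z := by
  obtain ⟨l, hl, hlen, rfl⟩ := exists_list_length_eq_wordLength hsymm hgen z
  rw [← hlen, List.prod_inv_reverse]
  refine (wordLength_list_prod_le fun s hs => ?_).trans (by simp)
  obtain ⟨t, ht, rfl⟩ := List.mem_map.mp (List.mem_reverse.mp hs)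
  exact hsymm t (hl t ht)

theorem wordLength_inv (hsymm : ∀ s ∈ U, s⁻¹ ∈ U) (hgen : Subgroup.closure U = ⊤)
    (z : G) : wordLength U z⁻¹ = wordLength U z :=
  le_antisymm (wordLength_inv_le hsymm hgen z)
    (by simpa using wordLength_inv_le hsymm hgen z⁻¹)

/-- Cutting a geodesic word for `z` after its first `wordLength U z - k` letters. -/
theorem exists_wordLength_mul_add_le (hsymm : ∀ s ∈ U, s⁻¹ ∈ U)
    (hgen : Subgroup.closure U = ⊤) {z : G} {k : ℕ} (hk : k ≤ wordLength U z) :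
    ∃ p : G, wordLength U p ≤ k ∧ wordLength U (z * p) + k ≤ wordLength U z := by
  obtain ⟨l, hl, hlen, rfl⟩ := exists_list_length_eq_wordLength hsymm hgen z
  refine ⟨(l.drop (l.length - k)).prod⁻¹, ?_, ?_⟩
  · rw [wordLength_inv hsymm hgen]
    refine (wordLength_list_prod_le fun s hs => hl s (List.drop_subset _ _ hs)).trans ?_
    simp only [List.length_drop]
    omega
  · have hprefix : l.prod * (l.drop (l.length - k)).prod⁻¹ = (l.take (l.length - k)).prod := by
      rw [← List.prod_take_mul_prod_drop l (l.length - k), mul_inv_cancel_right]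
    rw [hprefix]
    have := wordLength_list_prod_le fun s hs => hl s (List.take_subset (l.length - k) l hs)
    simp only [List.length_take] at this
    omega

theorem finite_setOf_wordLength_le (hfin : U.Finite) (hsymm : ∀ s ∈ U, s⁻¹ ∈ U)
    (hgen : Subgroup.closure U = ⊤) (m : ℕ) : {z : G | wordLength U z ≤ m}.Finite := by
  have : Finite U := hfin.to_subtype
  refine ((List.finite_length_le U m).image fun l => (l.map (↑)).prod).subset ?_
  intro z hz
  obtain ⟨l, hl, hlen, rfl⟩ := exists_list_length_eq_wordLength hsymm hgen z
  lift l to List U using hl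
  refine ⟨l, ?_, rfl⟩
  rw [Set.mem_ofPred_eq, ← List.length_map (f := ((↑) : U → G)), hlen]
  exact hz

theorem natAbs_toAdd_list_prod_le (φ : G →* Multiplicative ℤ)
    (hφU : ∀ s ∈ U, (φ s).toAdd.natAbs ≤ 1) {l : List G} (hl : ∀ s ∈ l, s ∈ U) :
    (φ l.prod).toAdd.natAbs ≤ l.length := by
  induction l with
  | nil => simp
  | cons a l ih =>
    have ha := hφU a (hl a List.mem_cons_self)
    have hl' := ih fun s hs => hl s (List.mem_cons_of_mem a hs)
    simp only [List.prod_cons, map_mul, toAdd_mul, List.length_cons]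
    omega

theorem natAbs_toAdd_le_wordLength (φ : G →* Multiplicative ℤ)
    (hφU : ∀ s ∈ U, (φ s).toAdd.natAbs ≤ 1) (hsymm : ∀ s ∈ U, s⁻¹ ∈ U)
    (hgen : Subgroup.closure U = ⊤) (z : G) : (φ z).toAdd.natAbs ≤ wordLength U z := by
  obtain ⟨l, hl, hlen, rfl⟩ := exists_list_length_eq_wordLength hsymm hgen z
  exact hlen ▸ natAbs_toAdd_list_prod_le φ hφU hl

end WordLength

theorem exists_finSymGen_natAbs_toAdd_le_one {G : Type*} [Group G] [Group.FG G]
    (φ : G →* Multiplicative ℤ) {g : G} (hg : (φ g).toAdd = 1) :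
    ∃ U : Set G, FinSymGen U ∧ g ∈ U ∧ ∀ s ∈ U, (φ s).toAdd.natAbs ≤ 1 := by
  obtain ⟨T, hT, hTfin⟩ := Group.fg_iff.mp ‹Group.FG G›
  set V : Set G := insert g ((fun t => t * g ^ (-(φ t).toAdd)) '' T)
  have hV : ∀ s ∈ V, (φ s).toAdd.natAbs ≤ 1 := by
    rintro s (rfl | ⟨t, -, rfl⟩) <;> simp [hg]
  refine ⟨V ∪ V⁻¹, ⟨((hTfin.image _).insert g).union ((hTfin.image _).insert g).inv, ?_, ?_⟩,
    Or.inl (Set.mem_insert g _), ?_⟩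
  · rintro s (hs | hs)
    · exact Or.inr (by simpa using hs)
    · exact Or.inl hs
  · rw [eq_top_iff, ← hT, Subgroup.closure_le]
    intro t ht
    have hmem : ∀ s ∈ V, s ∈ Subgroup.closure (V ∪ V⁻¹) := fun s hs =>
      Subgroup.subset_closure (Or.inl hs)
    rw [SetLike.mem_coe, show t = t * g ^ (-(φ t).toAdd) * g ^ (φ t).toAdd by group]
    exact mul_mem (hmem _ (Or.inr ⟨t, ht, rfl⟩)) (zpow_mem (hmem g (Set.mem_insert g _)) _)
  · rintro s (hs | hs)
    · exact hV s hs
    · simpa using hV _ hs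

section HybridMetric

variable {G : Type*} [Group G]

/-- Halving the word length lets `|φ|` dominate far out along the ray `n ↦ gⁿ` with `φ g = 1`,
which makes `-φ` the limit of the Busemann functions along that ray. -/
noncomputable def hybridLength (φ : G →* Multiplicative ℤ) (U : Set G) (z : G) : ℕ :=
  max (φ z).toAdd.natAbs ((wordLength U z + 1) / 2)

noncomputable def hybridDist (φ : G →* Multiplicative ℤ) (U : Set G) (x y : G) : ℝ :=
  hybridLength φ U (x⁻¹ * y)

variable {φ : G →* Multiplicative ℤ} {U : Set G}

theorem hybridLength_one : hybridLength φ U 1 = 0 := by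
  simp [hybridLength, wordLength_one]

theorem natAbs_toAdd_le_hybridLength (z : G) : (φ z).toAdd.natAbs ≤ hybridLength φ U z :=
  le_max_left _ _

theorem wordLength_le_two_mul_hybridLength (z : G) : wordLength U z ≤ 2 * hybridLength φ U z := by
  simp only [hybridLength]
  omega

theorem hybridLength_le_wordLength (hφU : ∀ s ∈ U, (φ s).toAdd.natAbs ≤ 1)
    (hsymm : ∀ s ∈ U, s⁻¹ ∈ U) (hgen : Subgroup.closure U = ⊤) (z : G) :
    hybridLength φ U z ≤ wordLength U z :=
  max_le (natAbs_toAdd_le_wordLength φ hφU hsymm hgen z) (by omega)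

theorem eq_one_of_hybridLength_eq_zero (hsymm : ∀ s ∈ U, s⁻¹ ∈ U)
    (hgen : Subgroup.closure U = ⊤) {z : G} (hz : hybridLength φ U z = 0) : z = 1 :=
  eq_one_of_wordLength_eq_zero hsymm hgen (by simp only [hybridLength] at hz; omega)

theorem hybridLength_inv (hsymm : ∀ s ∈ U, s⁻¹ ∈ U) (hgen : Subgroup.closure U = ⊤) (z : G) :
    hybridLength φ U z⁻¹ = hybridLength φ U z := by
  simp [hybridLength, wordLength_inv hsymm hgen]

theorem hybridLength_mul_le (hsymm : ∀ s ∈ U, s⁻¹ ∈ U) (hgen : Subgroup.closure U = ⊤)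
    (a b : G) : hybridLength φ U (a * b) ≤ hybridLength φ U a + hybridLength φ U b := by
  have hφ : (φ (a * b)).toAdd.natAbs ≤ (φ a).toAdd.natAbs + (φ b).toAdd.natAbs := by
    simpa using Int.natAbs_add_le _ _
  have hwl := wordLength_mul_le hsymm hgen a b
  simp only [hybridLength]
  omega

theorem isMetric_hybridDist (hsymm : ∀ s ∈ U, s⁻¹ ∈ U) (hgen : Subgroup.closure U = ⊤) :
    IsMetric (hybridDist φ U) := by
  refine ⟨fun _ _ => Nat.cast_nonneg _, fun x y => ?_, fun x y => ?_, fun x y z => ?_⟩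
  · simp only [hybridDist, Nat.cast_eq_zero]
    refine ⟨fun h => inv_mul_eq_one.mp (eq_one_of_hybridLength_eq_zero hsymm hgen h), ?_⟩
    rintro rfl
    simp [hybridLength_one]
  · rw [hybridDist, hybridDist, ← hybridLength_inv hsymm hgen, mul_inv_rev, inv_inv]
  · have := hybridLength_mul_le (φ := φ) hsymm hgen (x⁻¹ * y) (y⁻¹ * z)
    rw [show x⁻¹ * y * (y⁻¹ * z) = x⁻¹ * z by group] at this
    simp only [hybridDist]
    exact_mod_cast this

theorem hybridDist_mul_left (x y z : G) :
    hybridDist φ U (z * x) (z * y) = hybridDist φ U x y := by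
  simp [hybridDist, mul_assoc]

theorem bus_hybridDist (x y : G) :
    bus (hybridDist φ U) x y = hybridLength φ U (x⁻¹ * y) - hybridLength φ U x⁻¹ := by
  simp [bus, hybridDist]

theorem finite_setOf_hybridDist_le (hfin : U.Finite) (hsymm : ∀ s ∈ U, s⁻¹ ∈ U)
    (hgen : Subgroup.closure U = ⊤) (r : ℝ) : {x : G | hybridDist φ U x 1 ≤ r}.Finite := by
  refine ((finite_setOf_wordLength_le hfin hsymm hgen ⌊2 * r⌋₊).image (·⁻¹)).subset
    fun x hx => ⟨x⁻¹, Nat.le_floor ?_, inv_inv x⟩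
  have hwl : (wordLength U x⁻¹ : ℝ) ≤ 2 * hybridLength φ U x⁻¹ := by
    exact_mod_cast wordLength_le_two_mul_hybridLength x⁻¹
  simp only [Set.mem_ofPred_eq, hybridDist, mul_one] at hx
  linarith

theorem qiToCayley_hybridDist (hU : FinSymGen U) (hφU : ∀ s ∈ U, (φ s).toAdd.natAbs ≤ 1) :
    QIToCayley (hybridDist φ U) := by
  refine ⟨U, hU, id, 2, two_pos, fun y => ⟨y, by simp [wordDist, wordLength_one]⟩,
    fun x y => ?_⟩
  have hupper : (wordLength U (x⁻¹ * y) : ℝ) ≤ 2 * hybridLength φ U (x⁻¹ * y) := by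
    exact_mod_cast wordLength_le_two_mul_hybridLength _
  have hlower : (hybridLength φ U (x⁻¹ * y) : ℝ) ≤ wordLength U (x⁻¹ * y) := by
    exact_mod_cast hybridLength_le_wordLength hφU hU.2.1 hU.2.2 _
  simp only [wordDist, hybridDist, id]
  constructor <;> linarith

end HybridMetric

section Unbounded

variable {G : Type*} [Group G] {φ : G →* Multiplicative ℤ} {U : Set G}

theorem exists_hybridLength_mul_add_le (hφU : ∀ s ∈ U, (φ s).toAdd.natAbs ≤ 1)
    (hsymm : ∀ s ∈ U, s⁻¹ ∈ U) (hgen : Subgroup.closure U = ⊤) {z : G} {t : ℕ}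
    (hz : (φ z).toAdd.natAbs + 3 * t ≤ (wordLength U z + 1) / 2) :
    ∃ p : G, wordLength U p ≤ 2 * t ∧ hybridLength φ U (z * p) + t ≤ hybridLength φ U z := by
  obtain ⟨p, hp, hzp⟩ := exists_wordLength_mul_add_le hsymm hgen (z := z) (k := 2 * t) (by omega)
  have hφp := natAbs_toAdd_le_wordLength φ hφU hsymm hgen p
  have hφzp : (φ (z * p)).toAdd.natAbs ≤ (φ z).toAdd.natAbs + (φ p).toAdd.natAbs := by
    simpa using Int.natAbs_add_le _ _
  refine ⟨p, hp, ?_⟩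
  simp only [hybridLength]
  omega

theorem exists_le_neg_of_frequently_natAbs_toAdd_add_le (hfin : U.Finite)
    (hφU : ∀ s ∈ U, (φ s).toAdd.natAbs ≤ 1) (hsymm : ∀ s ∈ U, s⁻¹ ∈ U)
    (hgen : Subgroup.closure U = ⊤) {u : ℕ → G} {h : G → ℝ}
    (hu : ∀ y, Tendsto (fun n => bus (hybridDist φ U) (u n) y) atTop (𝓝 (h y))) {t : ℕ}
    (hfreq : ∃ᶠ n in atTop,
      (φ (u n)⁻¹).toAdd.natAbs + 3 * t ≤ (wordLength U (u n)⁻¹ + 1) / 2) :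
    ∃ p : G, h p ≤ -t := by
  have hdescent : ∃ᶠ n in atTop, ∃ p ∈ {p : G | wordLength U p ≤ 2 * t},
      bus (hybridDist φ U) (u n) p ≤ -t := hfreq.mono fun n hn => by
    obtain ⟨p, hp, hdrop⟩ := exists_hybridLength_mul_add_le hφU hsymm hgen hn
    refine ⟨p, hp, ?_⟩
    have : (hybridLength φ U ((u n)⁻¹ * p) : ℝ) + t ≤ hybridLength φ U (u n)⁻¹ := by
      exact_mod_cast hdrop
    rw [bus_hybridDist]
    linarith
  obtain ⟨p, -, hp⟩ :=
    (finite_setOf_wordLength_le hfin hsymm hgen _).frequently_exists.mp hdescent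
  exact ⟨p, le_of_tendsto_of_frequently (hu p) hp⟩

theorem natAbs_toAdd_add_le_max_hybridLength {g : G} (hg : (φ g).toAdd = 1) (z : G) (k : ℕ) :
    (φ z).toAdd.natAbs + k ≤
      max (hybridLength φ U (z * g ^ k)) (hybridLength φ U (z * (g ^ k)⁻¹)) := by
  have h₁ := natAbs_toAdd_le_hybridLength (φ := φ) (U := U) (z * g ^ k)
  have h₂ := natAbs_toAdd_le_hybridLength (φ := φ) (U := U) (z * (g ^ k)⁻¹)
  simp only [map_mul, map_inv, map_pow, toAdd_mul, toAdd_inv, toAdd_pow, hg,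
    nsmul_eq_mul, mul_one] at h₁ h₂
  omega

theorem le_max_of_eventually_hybridLength_le {g : G} (hg : (φ g).toAdd = 1) {u : ℕ → G}
    {h : G → ℝ} (hu : ∀ y, Tendsto (fun n => bus (hybridDist φ U) (u n) y) atTop (𝓝 (h y)))
    {D : ℕ} (hD : ∀ᶠ n in atTop, hybridLength φ U (u n)⁻¹ ≤ (φ (u n)⁻¹).toAdd.natAbs + D)
    (k : ℕ) : (k : ℝ) - D ≤ max (h (g ^ k)) (h (g ^ k)⁻¹) := by
  refine ge_of_tendsto ((hu _).max (hu _)) (hD.mono fun n hn => ?_)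
  have hk : ((φ (u n)⁻¹).toAdd.natAbs + k : ℝ) ≤ max (hybridLength φ U ((u n)⁻¹ * g ^ k) : ℝ)
      (hybridLength φ U ((u n)⁻¹ * (g ^ k)⁻¹)) := by
    exact_mod_cast natAbs_toAdd_add_le_max_hybridLength hg (u n)⁻¹ k
  have hn' : (hybridLength φ U (u n)⁻¹ : ℝ) ≤ (φ (u n)⁻¹).toAdd.natAbs + D := by
    exact_mod_cast hn
  simp only [bus_hybridDist, max_sub_sub_right]
  linarith

theorem not_bounded_of_tendsto_bus_hybridDist (hfin : U.Finite)
    (hφU : ∀ s ∈ U, (φ s).toAdd.natAbs ≤ 1) (hsymm : ∀ s ∈ U, s⁻¹ ∈ U)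
    (hgen : Subgroup.closure U = ⊤) {g : G} (hg : (φ g).toAdd = 1) {u : ℕ → G} {h : G → ℝ}
    (hu : ∀ y, Tendsto (fun n => bus (hybridDist φ U) (u n) y) atTop (𝓝 (h y))) :
    ¬ ∃ B : ℝ, ∀ x : G, |h x| ≤ B := by
  rintro ⟨B, hB⟩
  have hBlt : B < (⌊B⌋₊ + 1 : ℕ) := by
    push_cast
    exact Nat.lt_floor_add_one B
  by_cases hwide : ∀ t : ℕ, ∃ᶠ n in atTop,
      (φ (u n)⁻¹).toAdd.natAbs + 3 * t ≤ (wordLength U (u n)⁻¹ + 1) / 2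
  · obtain ⟨p, hp⟩ :=
      exists_le_neg_of_frequently_natAbs_toAdd_add_le hfin hφU hsymm hgen hu (hwide _)
    linarith [(abs_le.mp (hB p)).1]
  · push Not at hwide
    obtain ⟨t, ht⟩ := hwide
    have hD : ∀ᶠ n in atTop, hybridLength φ U (u n)⁻¹ ≤ (φ (u n)⁻¹).toAdd.natAbs + 3 * t :=
      ht.mono fun n hn => by
        simp only [hybridLength]
        omega
    have hk := le_max_of_eventually_hybridLength_le hg hu hD (⌊B⌋₊ + 1 + 3 * t)
    have hmax := max_le (abs_le.mp (hB (g ^ (⌊B⌋₊ + 1 + 3 * t)))).2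
      (abs_le.mp (hB (g ^ (⌊B⌋₊ + 1 + 3 * t))⁻¹)).2
    push_cast at hBlt hk
    linarith

theorem isBanachMetric_hybridDist (hU : FinSymGen U) (hφU : ∀ s ∈ U, (φ s).toAdd.natAbs ≤ 1)
    {g : G} (hg : (φ g).toAdd = 1) : IsBanachMetric (hybridDist φ U) := by
  obtain ⟨hfin, hsymm, hgen⟩ := hU
  exact ⟨isMetric_hybridDist hsymm hgen, fun x y => ⟨_, rfl⟩, hybridDist_mul_left,
    finite_setOf_hybridDist_le hfin hsymm hgen, qiToCayley_hybridDist ⟨hfin, hsymm, hgen⟩ hφU,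
    fun _ ⟨⟨_, hu⟩, _⟩ => not_bounded_of_tendsto_bus_hybridDist hfin hφU hsymm hgen hg hu⟩

end Unbounded

section Horofunction

variable {G : Type*} [Group G] {φ : G →* Multiplicative ℤ} {U : Set G}

theorem hybridLength_inv_pow_mul (hsymm : ∀ s ∈ U, s⁻¹ ∈ U) (hgen : Subgroup.closure U = ⊤)
    {g : G} (hg : (φ g).toAdd = 1) (hgU : g ∈ U) {y : G} {n : ℕ}
    (hn : 2 * (φ y).toAdd.natAbs + wordLength U y + 1 ≤ n) :
    (hybridLength φ U ((g ^ n)⁻¹ * y) : ℤ) = n - (φ y).toAdd := by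
  have hφ : (φ ((g ^ n)⁻¹ * y)).toAdd = (φ y).toAdd - n := by
    simp only [map_mul, map_inv, map_pow, toAdd_mul, toAdd_inv, toAdd_pow, hg,
      nsmul_eq_mul, mul_one]
    ring
  have hwl : wordLength U ((g ^ n)⁻¹ * y) ≤ n + wordLength U y := by
    refine (wordLength_mul_le hsymm hgen _ _).trans ?_
    rw [wordLength_inv hsymm hgen]
    exact Nat.add_le_add_right (wordLength_pow_le hgU n) _
  simp only [hybridLength, hφ]
  omega

theorem tendsto_bus_hybridDist_pow (hsymm : ∀ s ∈ U, s⁻¹ ∈ U) (hgen : Subgroup.closure U = ⊤)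
    {g : G} (hg : (φ g).toAdd = 1) (hgU : g ∈ U) (y : G) :
    Tendsto (fun n : ℕ => bus (hybridDist φ U) (g ^ n) y) atTop (𝓝 (-((φ y).toAdd : ℝ))) := by
  refine tendsto_const_nhds.congr' ((eventually_ge_atTop
    (2 * (φ y).toAdd.natAbs + wordLength U y + 1)).mono fun n hn => ?_)
  have hy : (hybridLength φ U ((g ^ n)⁻¹ * y) : ℝ) = n - (φ y).toAdd := by
    exact_mod_cast hybridLength_inv_pow_mul hsymm hgen hg hgU hn
  have h₁ : (hybridLength φ U (g ^ n)⁻¹ : ℝ) = n := by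
    have := hybridLength_inv_pow_mul hsymm hgen hg hgU (y := 1) (n := n)
      (by simp only [map_one, toAdd_one, Int.natAbs_zero, wordLength_one]; omega)
    rw [mul_one, map_one, toAdd_one, sub_zero] at this
    exact_mod_cast this
  simp only [bus_hybridDist, hy, h₁]
  ring

theorem inBoundary_hybridDist_neg_toAdd (hsymm : ∀ s ∈ U, s⁻¹ ∈ U)
    (hgen : Subgroup.closure U = ⊤) {g : G} (hg : (φ g).toAdd = 1) (hgU : g ∈ U) :
    InBoundary (hybridDist φ U) fun y => -((φ y).toAdd : ℝ) := by
  refine ⟨⟨fun n => g ^ n, tendsto_bus_hybridDist_pow hsymm hgen hg hgU⟩, fun x hx => ?_⟩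
  have hk := congrFun hx (g ^ (hybridLength φ U x⁻¹ + 1))
  simp only [bus_hybridDist, map_pow, toAdd_pow, hg, nsmul_eq_mul, mul_one] at hk
  push_cast at hk
  linarith [(Nat.cast_nonneg _ : (0 : ℝ) ≤ hybridLength φ U (x⁻¹ * g ^ (hybridLength φ U x⁻¹ + 1)))]

end Horofunction

theorem act_neg_toAdd {G : Type*} [Group G] (φ : G →* Multiplicative ℤ) (x : G) :
    act x (fun y => -((φ y).toAdd : ℝ)) = fun y => -((φ y).toAdd : ℝ) := by
  funext y
  simp only [act, map_mul, map_inv, toAdd_mul, toAdd_inv, Int.cast_add, Int.cast_neg]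
  ring

theorem exists_banachMetric_fixedPoint_of_surjective_to_int_general
    {G : Type*} [Group G] [Group.FG G]
    (hsurj : ∃ π : G →* Multiplicative ℤ, Function.Surjective π) :
    ∃ d : G → G → ℝ, IsBanachMetric d ∧
      ∃ h : G → ℝ, InBoundary d h ∧ ∀ x : G, act x h = h := by
  obtain ⟨π, hπ⟩ := hsurj
  obtain ⟨g, hg⟩ := hπ (Multiplicative.ofAdd 1)
  replace hg : (π g).toAdd = 1 := by rw [hg, toAdd_ofAdd]
  obtain ⟨U, hU, hgU, hπU⟩ := exists_finSymGen_natAbs_toAdd_le_one π hg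
  exact ⟨hybridDist π U, isBanachMetric_hybridDist hU hπU hg, _,
    inBoundary_hybridDist_neg_toAdd hU.2.1 hU.2.2 hg hgU, act_neg_toAdd π⟩

/-- If a finitely generated infinite group `G` admits a surjective
homomorphism onto `ℤ`, then there is a Banach metric `d` on `G` and a metric
functional `h ∈ ∂(G,d)` which is a fixed point of the `G`-action. -/
theorem exists_banachMetric_fixedPoint_of_surjective_to_int
    {G : Type*} [Group G] [Group.FG G] [Infinite G]
    (hsurj : ∃ π : G →* Multiplicative ℤ, Function.Surjective π) :
    ∃ d : G → G → ℝ, IsBanachMetric d ∧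
      ∃ h : G → ℝ, InBoundary d h ∧ ∀ x : G, act x h = h :=
  exists_banachMetric_fixedPoint_of_surjective_to_int_general hsurj
end

section
/- Let d be an integer-valued, proper, geodesic metric on a set X with base point x₀. Suppose (x_n) is a sequence in X with d(x_n,x₀) → ∞ such that the Busemann functions b_{x_n} converge pointwise to a function f : X → ℝ. Then for every natural number r there exists x ∈ X with d(x,x₀) = r and f(x) = −r. In particular, f is unbounded from below. -/
open Filter Topology

/-!
On a geodesic from `u n` to `x₀` (once `d (u n) x₀ ≥ r`) the point at distance `r` from `x₀`
has Busemann value exactly `-r` with respect to `u n`. All these points lie in the finite sphere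
of radius `r` about `x₀`, so if `f` differed from `-r` on the whole sphere, pointwise convergence
would make every Busemann function `b_{u n}` with `n` large differ from `-r` there as well.
-/

theorem exists_mem_eq_of_tendsto_of_eventually_exists_mem_eq {ι X Y : Type*} {l : Filter ι}
    [l.NeBot] [TopologicalSpace Y] [T1Space Y] {S : Set X} (hS : S.Finite)
    {F : ι → X → Y} {f : X → Y} (hF : ∀ x, Tendsto (fun i => F i x) l (𝓝 (f x))) {c : Y}
    (h : ∀ᶠ i in l, ∃ x ∈ S, F i x = c) : ∃ x ∈ S, f x = c := by
  by_contra! hne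
  have hF_ne : ∀ᶠ i in l, ∀ x ∈ S, F i x ≠ c :=
    (eventually_all_finite hS).2 fun x hx => (hF x).eventually_ne (hne x hx)
  obtain ⟨i, ⟨x, hxS, hx⟩, hi⟩ := (h.and hF_ne).exists
  exact hi x hxS hx

theorem exists_dist_eq_sub_of_geodesic {X : Type*} {d : X → X → ℝ}
    (hgeo : ∀ x y : X, ∃ n : ℕ, ∃ z : ℕ → X, z 0 = x ∧ z n = y ∧
      ∀ j k : ℕ, j ≤ n → k ≤ n → d (z j) (z k) = |(j : ℝ) - (k : ℝ)|)
    (x y : X) {r : ℕ} (hr : (r : ℝ) ≤ d x y) :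
    ∃ z : X, d z y = r ∧ d x z = d x y - r := by
  obtain ⟨n, z, rfl, rfl, hz⟩ := hgeo x y
  have hd : d (z 0) (z n) = n := by simpa using hz 0 n (Nat.zero_le n) le_rfl
  have hrn : r ≤ n := by rw [hd] at hr; exact_mod_cast hr
  refine ⟨z (n - r), ?_, ?_⟩
  · rw [hz _ _ (Nat.sub_le n r) le_rfl, Nat.cast_sub hrn]
    simp
  · rw [hz _ _ (Nat.zero_le _) (Nat.sub_le n r), hd, Nat.cast_sub hrn]
    simp [abs_of_nonpos (sub_nonpos.2 (Nat.cast_le.2 hrn : (r : ℝ) ≤ n))]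

theorem metric_functional_unbounded_below_of_geodesic_general
    {X : Type*} (d : X → X → ℝ) (x₀ : X)
    (hproper : ∀ r : ℝ, {x : X | d x x₀ ≤ r}.Finite)
    (hgeo : ∀ x y : X, ∃ n : ℕ, ∃ z : ℕ → X, z 0 = x ∧ z n = y ∧
      ∀ j k : ℕ, j ≤ n → k ≤ n → d (z j) (z k) = |(j : ℝ) - (k : ℝ)|)
    (u : ℕ → X) (hu : Tendsto (fun n => d (u n) x₀) atTop atTop)
    (f : X → ℝ)
    (hconv : ∀ y : X,
      Tendsto (fun n => d (u n) y - d (u n) x₀) atTop (𝓝 (f y))) :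
    (∀ r : ℕ, ∃ x : X, d x x₀ = (r : ℝ) ∧ f x = -(r : ℝ)) ∧
      ¬ BddBelow (Set.range f) := by
  have hsphere : ∀ r : ℕ, ∃ x : X, d x x₀ = (r : ℝ) ∧ f x = -(r : ℝ) := by
    intro r
    set S := {x : X | d x x₀ = r}
    have hS : S.Finite := (hproper r).subset fun x hx => le_of_eq hx
    have hb : ∀ᶠ n in atTop, ∃ x ∈ S, d (u n) x - d (u n) x₀ = -r := by
      filter_upwards [hu.eventually_ge_atTop (r : ℝ)] with n hn
      obtain ⟨x, hx, hux⟩ := exists_dist_eq_sub_of_geodesic hgeo (u n) x₀ hn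
      exact ⟨x, hx, by rw [hux]; ring⟩
    exact exists_mem_eq_of_tendsto_of_eventually_exists_mem_eq hS hconv hb
  refine ⟨hsphere, fun ⟨B, hB⟩ => ?_⟩
  obtain ⟨r, hr⟩ := exists_nat_gt (-B)
  obtain ⟨x, -, hx⟩ := hsphere r
  have : B ≤ f x := hB (Set.mem_range_self x)
  linarith

/-- For an integer-valued proper geodesic metric `d` on `X` with
base point `x₀` and a sequence `xₙ` with `d(xₙ,x₀) → ∞` whose Busemann functions
converge pointwise to `f`, for every `r : ℕ` there is `x` with `d(x,x₀) = r` and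
`f(x) = -r`; in particular `f` is unbounded from below. -/
theorem metric_functional_unbounded_below_of_geodesic
    {X : Type*} (d : X → X → ℝ) (x₀ : X)
    (hmet : IsMetric d)
    (hint : ∀ x y : X, ∃ n : ℕ, d x y = n)
    (hproper : ∀ r : ℝ, {x : X | d x x₀ ≤ r}.Finite)
    (hgeo : ∀ x y : X, ∃ n : ℕ, ∃ z : ℕ → X, z 0 = x ∧ z n = y ∧
      ∀ j k : ℕ, j ≤ n → k ≤ n → d (z j) (z k) = |(j : ℝ) - (k : ℝ)|)
    (u : ℕ → X) (hu : Tendsto (fun n => d (u n) x₀) atTop atTop)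
    (f : X → ℝ)
    (hconv : ∀ y : X,
      Tendsto (fun n => d (u n) y - d (u n) x₀) atTop (𝓝 (f y))) :
    (∀ r : ℕ, ∃ x : X, d x x₀ = (r : ℝ) ∧ f x = -(r : ℝ)) ∧
      ¬ BddBelow (Set.range f) :=
  metric_functional_unbounded_below_of_geodesic_general d x₀ hproper hgeo u hu f hconv
end
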